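/- Let k be a field and let θ, φ ∈ k[x_1,x_2] be relatively prime homogeneous polynomials with deg θ = 2 and deg φ = 4. Then the six polynomials x_1^3θ, x_1^2x_2θ, x_1x_2^2θ, x_2^3θ, x_1φ, x_2φ are linearly independent over k (hence span the 6-dimensional space M_5 of degree-5 forms). -/

import Mathlib

/-!
A vanishing combination of the six forms reads `p * θ + q * φ = 0` with `p` a cubic and `q` a
linear binary form. Since `θ` and `φ` are coprime, `θ ∣ q`, and a nonzero multiple of the
quadric `θ` cannot have degree `1`; so `q = 0`. Then `p * θ = 0` with `θ ≠ 0` (otherwise `φ`,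
of positive degree, would be a unit), so `p = 0`. Distinct monomials being independent, all
coefficients vanish.
-/

open MvPolynomial

namespace MvPolynomial

variable {σ R : Type*}

theorem eq_zero_of_dvd_of_totalDegree_lt [CommSemiring R] [NoZeroDivisors R]
    {θ q : MvPolynomial σ R} (hdvd : θ ∣ q) (hlt : q.totalDegree < θ.totalDegree) :
    q = 0 := by
  by_contra hq
  obtain ⟨r, rfl⟩ := hdvd
  rw [totalDegree_mul_of_isDomain (left_ne_zero_of_mul hq) (right_ne_zero_of_mul hq)] at hlt
  omega

theorem IsHomogeneous.not_isUnit [CommRing R] [IsReduced R] [Nontrivial R]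
    {φ : MvPolynomial σ R} {n : ℕ} (hφ : φ.IsHomogeneous n) (hn : 0 < n) : ¬IsUnit φ := by
  intro hu
  have hφ0 : φ ≠ 0 := by rintro rfl; exact not_isUnit_zero hu
  have := (isUnit_iff_totalDegree_of_isReduced.mp hu).2
  rw [hφ.totalDegree hφ0] at this
  omega

theorem isHomogeneous_X_pow_mul_X_pow [CommSemiring R] (a b : σ) (k l : ℕ) :
    (X a ^ k * X b ^ l : MvPolynomial σ R).IsHomogeneous (k + l) := by
  simpa using ((isHomogeneous_X R a).pow k).mul ((isHomogeneous_X R b).pow l)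

theorem linearIndependent_X_pow_mul_X_pow [CommSemiring R] (n : ℕ) :
    LinearIndependent R fun i : Fin (n + 1) =>
      (X 0 ^ (n - i) * X 1 ^ (i : ℕ) : MvPolynomial (Fin 2) R) := by
  nontriviality R
  have hinj : Function.Injective fun i : Fin (n + 1) =>
      Finsupp.single (0 : Fin 2) (n - i) + Finsupp.single 1 (i : ℕ) := by
    intro i j h
    simpa [Fin.ext_iff] using DFunLike.congr_fun h 1
  convert (basisMonomials (Fin 2) R).linearIndependent.comp _ hinj with i
  simp [X_pow_eq_monomial, monomial_mul]

noncomputable def binaryForm [CommSemiring R] (n : ℕ) (c : Fin (n + 1) → R) :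
    MvPolynomial (Fin 2) R :=
  ∑ i, c i • (X 0 ^ (n - i) * X 1 ^ (i : ℕ))

theorem isHomogeneous_binaryForm [CommSemiring R] (n : ℕ) (c : Fin (n + 1) → R) :
    (binaryForm n c).IsHomogeneous n := by
  refine Submodule.sum_mem (homogeneousSubmodule _ _ n) fun i _ => Submodule.smul_mem _ _ ?_
  simpa [Nat.sub_add_cancel i.is_le] using isHomogeneous_X_pow_mul_X_pow (R := R) 0 1 (n - i) i

theorem binaryForm_eq_zero_iff [CommRing R] {n : ℕ} {c : Fin (n + 1) → R} :
    binaryForm n c = 0 ↔ c = 0 := by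
  refine ⟨fun h => _root_.funext <|
    Fintype.linearIndependent_iff.mp (linearIndependent_X_pow_mul_X_pow n) c h, ?_⟩
  rintro rfl
  simp [binaryForm]

theorem eq_zero_and_eq_zero_of_mul_add_mul_eq_zero [CommRing R] [IsDomain R]
    [DecompositionMonoid (MvPolynomial σ R)] {θ φ p q : MvPolynomial σ R} {n m d : ℕ}
    (hθ : θ.IsHomogeneous n) (hφ : φ.IsHomogeneous m) (hm : 0 < m) (hrel : IsRelPrime θ φ)
    (hq : q.IsHomogeneous d) (hd : d < n) (h : p * θ + q * φ = 0) : p = 0 ∧ q = 0 := by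
  have hθ0 : θ ≠ 0 := by
    rintro rfl
    exact hφ.not_isUnit hm (isRelPrime_zero_left.mp hrel)
  have hq0 : q = 0 := by
    refine eq_zero_of_dvd_of_totalDegree_lt (hrel.dvd_of_dvd_mul_right ⟨-p, ?_⟩) ?_
    · linear_combination h
    · rw [hθ.totalDegree hθ0]
      exact hq.totalDegree_le.trans_lt hd
  subst hq0
  exact ⟨(mul_eq_zero.mp (by simpa using h)).resolve_right hθ0, rfl⟩

end MvPolynomial

theorem stmt12 {k : Type*} [Field k]
    (θ φ : MvPolynomial (Fin 2) k)
    (hθ : θ.IsHomogeneous 2) (hφ : φ.IsHomogeneous 4)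
    (hrel : IsRelPrime θ φ) :
    LinearIndependent k
      ![X 0 ^ 3 * θ, X 0 ^ 2 * X 1 * θ, X 0 * X 1 ^ 2 * θ, (X 1 : MvPolynomial (Fin 2) k) ^ 3 * θ,
        X 0 * φ, X 1 * φ] := by
  rw [Fintype.linearIndependent_iff]
  intro g hg
  have hsum : binaryForm 3 (fun i => g (Fin.castAdd 2 i)) * θ
      + binaryForm 1 (fun j => g (Fin.natAdd 4 j)) * φ = 0 := by
    rw [← hg]
    simp [binaryForm, Fin.sum_univ_succ, add_mul, add_assoc]
  obtain ⟨hc, he⟩ := eq_zero_and_eq_zero_of_mul_add_mul_eq_zero hθ hφ (by norm_num) hrel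
    (isHomogeneous_binaryForm 1 _) (by norm_num) hsum
  rw [binaryForm_eq_zero_iff, funext_iff] at hc he
  exact fun i => Fin.addCases (m := 4) (n := 2) (motive := fun i => g i = 0) hc he i
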